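/- Let A and B be finite connected graphs. The Cartesian product A□B is generalized t-edge distance-balanced if A and B are both generalized t-edge distance-balanced and generalized t-distance-balanced, with consistent orientations (i.e., for each edge a₁a₂ ∈ E(A), m_{a₁} = t·m_{a₂} and n_{a₁} = t·n_{a₂} simultaneously, and similarly for B). -/

import Mathlib

open SimpleGraph Finset

/-- Distance from a vertex to an edge: the minimum distance to its endpoints. -/
noncomputable def edgeDist {V : Type*} (G : SimpleGraph V) (v : V) (e : Sym2 V) : ℕ :=
  Sym2.lift ⟨fun x y => min (G.dist v x) (G.dist v y), fun _ _ => min_comm _ _⟩ e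

/-- Number of edges strictly closer to `α` than to `β`. -/
noncomputable def mCount {V : Type*} (G : SimpleGraph V) (α β : V) : ℕ :=
  {e ∈ G.edgeSet | edgeDist G α e < edgeDist G β e}.ncard

/-- Number of vertices strictly closer to `α` than to `β`. -/
noncomputable def nCount {V : Type*} (G : SimpleGraph V) (α β : V) : ℕ :=
  {w : V | G.dist w α < G.dist w β}.ncard

/-- Number of edges other than `αβ` itself equidistant from `α` and `β`. -/
noncomputable def m0Count {V : Type*} (G : SimpleGraph V) (α β : V) : ℕ :=
  {e ∈ G.edgeSet | e ≠ s(α, β) ∧ edgeDist G α e = edgeDist G β e}.ncard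

/-- The distance-partition class `D'^i_j(αβ)`: edges at distance `i` from `α`
and `j` from `β`. -/
def Dset {V : Type*} (G : SimpleGraph V) (α β : V) (i j : ℕ) : Set (Sym2 V) :=
  {e ∈ G.edgeSet | edgeDist G α e = i ∧ edgeDist G β e = j}

/-- Generalized t-edge distance-balanced graph. -/
def GtEDB {V : Type*} (G : SimpleGraph V) (t : ℕ) : Prop :=
  ∀ α β : V, G.Adj α β →
    mCount G α β = t * mCount G β α ∨ mCount G β α = t * mCount G α β

/-- The lexicographic product of two simple graphs. -/
def lexProd {V W : Type*} (A : SimpleGraph V) (B : SimpleGraph W) :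
    SimpleGraph (V × W) where
  Adj p q := A.Adj p.1 q.1 ∨ (p.1 = q.1 ∧ B.Adj p.2 q.2)
  symm := by
    constructor
    rintro p q (h | ⟨h1, h2⟩)
    · exact Or.inl h.symm
    · exact Or.inr ⟨h1.symm, h2.symm⟩
  loopless := by
    constructor
    rintro p (h | ⟨_, h⟩)
    · exact A.loopless.irrefl _ h
    · exact B.loopless.irrefl _ h

/-! In `A □ B` distances add coordinatewise. So, for the edge `(a₁, b)(a₂, b)`, an edge
`(a, c)(a', c)` is closer to `(a₁, b)` exactly when `aa'` is closer to `a₁` in `A`, and an edge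
`(x, c)(x, c')` exactly when the vertex `x` is closer to `a₁`. Hence
`m_{(a₁,b)} = m_{a₁} |V(B)| + n_{a₁} |E(B)|`, and when `m` and `n` are scaled by `t` in the same
direction, so is this combination. -/

section BoxProd

variable {V W : Type*} {A : SimpleGraph V} {B : SimpleGraph W}

lemma dist_boxProd_of_reachable {x y : V × W} (h₁ : A.Reachable x.1 y.1)
    (h₂ : B.Reachable x.2 y.2) :
    (A □ B).dist x y = A.dist x.1 y.1 + B.dist x.2 y.2 := by
  rw [SimpleGraph.dist, edist_boxProd]
  exact ENat.toNat_add (edist_ne_top_iff_reachable.2 h₁) (edist_ne_top_iff_reachable.2 h₂)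

lemma edgeDist_boxProd_map_left (hA : A.Connected) (hB : B.Connected) (x : V × W) (e : Sym2 V)
    (c : W) :
    edgeDist (A □ B) x (e.map (·, c)) = edgeDist A x.1 e + B.dist x.2 c := by
  induction e using Sym2.ind with
  | _ u v =>
    simp only [edgeDist, Sym2.map_mk, Sym2.lift_mk,
      dist_boxProd_of_reachable (hA _ _) (hB _ _)]
    exact min_add_add_right _ _ _

lemma edgeDist_boxProd_map_right (hA : A.Connected) (hB : B.Connected) (x : V × W) (a : V)
    (e : Sym2 W) :
    edgeDist (A □ B) x (e.map (a, ·)) = A.dist x.1 a + edgeDist B x.2 e := by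
  induction e using Sym2.ind with
  | _ u v =>
    simp only [edgeDist, Sym2.map_mk, Sym2.lift_mk,
      dist_boxProd_of_reachable (hA _ _) (hB _ _)]
    exact min_add_add_left _ _ _

lemma ncard_sep_edgeSet_boxProd [Finite V] [Finite W] (S : Sym2 (V × W) → Prop) :
    {e ∈ (A □ B).edgeSet | S e}.ncard =
      {p : Sym2 V × W | p.1 ∈ A.edgeSet ∧ S (p.1.map (·, p.2))}.ncard +
      {p : V × Sym2 W | p.2 ∈ B.edgeSet ∧ S (p.2.map (p.1, ·))}.ncard := by
  set f : Sym2 V × W → Sym2 (V × W) := fun p => p.1.map (·, p.2)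
  set g : V × Sym2 W → Sym2 (V × W) := fun p => p.2.map (p.1, ·)
  have hf : f.Injective := by
    rintro ⟨e, c⟩ ⟨e', c'⟩ h
    induction e using Sym2.ind
    induction e' using Sym2.ind
    simp only [f, Sym2.map_mk, Sym2.eq_iff, Prod.mk.injEq] at h ⊢
    tauto
  have hg : g.Injective := by
    rintro ⟨a, e⟩ ⟨a', e'⟩ h
    induction e using Sym2.ind
    induction e' using Sym2.ind
    simp only [g, Sym2.map_mk, Sym2.eq_iff, Prod.mk.injEq] at h ⊢
    tauto
  have hsplit : {e ∈ (A □ B).edgeSet | S e} =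
      f '' {p | p.1 ∈ A.edgeSet ∧ S (f p)} ∪ g '' {p | p.2 ∈ B.edgeSet ∧ S (g p)} := by
    ext e
    constructor
    · rintro ⟨he, hS⟩
      induction e using Sym2.ind with
      | _ x y =>
        obtain ⟨a, b⟩ := x
        obtain ⟨a', b'⟩ := y
        rcases boxProd_adj.1 he with ⟨h, rfl : b = b'⟩ | ⟨h, rfl : a = a'⟩
        · exact Or.inl ⟨(s(a, a'), b), ⟨h, hS⟩, rfl⟩
        · exact Or.inr ⟨(a, s(b, b')), ⟨h, hS⟩, rfl⟩
    · rintro (⟨⟨e, c⟩, ⟨he, hS⟩, rfl⟩ | ⟨⟨a, e⟩, ⟨he, hS⟩, rfl⟩) <;>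
        refine ⟨?_, hS⟩ <;> induction e using Sym2.ind <;> simpa [f, g] using he
  have hdisj : Disjoint (f '' {p | p.1 ∈ A.edgeSet ∧ S (f p)})
      (g '' {p | p.2 ∈ B.edgeSet ∧ S (g p)}) := by
    rw [Set.disjoint_left]
    rintro _ ⟨⟨e, c⟩, ⟨he, -⟩, rfl⟩ ⟨⟨a, e'⟩, -, h⟩
    induction e using Sym2.ind
    induction e' using Sym2.ind
    simp only [f, g, Sym2.map_mk, Sym2.eq_iff, Prod.mk.injEq] at h
    have := (A.mem_edgeSet.1 he).ne
    grind
  rw [hsplit, Set.ncard_union_eq hdisj, Set.ncard_image_of_injective _ hf,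
    Set.ncard_image_of_injective _ hg]

variable [Finite V] [Finite W]

lemma mCount_boxProd_left (hA : A.Connected) (hB : B.Connected) (a₁ a₂ : V) (b : W) :
    mCount (A □ B) (a₁, b) (a₂, b) =
      mCount A a₁ a₂ * Nat.card W + nCount A a₁ a₂ * B.edgeSet.ncard := by
  rw [mCount, ncard_sep_edgeSet_boxProd, mCount, nCount, ← Set.ncard_univ, ← Set.ncard_prod,
    ← Set.ncard_prod]
  congr 2 <;> ext ⟨e, c⟩ <;>
    simp [edgeDist_boxProd_map_left hA hB, edgeDist_boxProd_map_right hA hB, dist_comm, and_comm]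

lemma mCount_boxProd_right (hA : A.Connected) (hB : B.Connected) (a : V) (b₁ b₂ : W) :
    mCount (A □ B) (a, b₁) (a, b₂) =
      mCount B b₁ b₂ * Nat.card V + nCount B b₁ b₂ * A.edgeSet.ncard := by
  rw [add_comm, mul_comm (nCount B b₁ b₂), mul_comm (mCount B b₁ b₂), mCount,
    ncard_sep_edgeSet_boxProd, mCount, nCount, ← Set.ncard_univ, ← Set.ncard_prod,
    ← Set.ncard_prod]
  congr 2 <;> ext ⟨e, c⟩ <;>
    simp [edgeDist_boxProd_map_left hA hB, edgeDist_boxProd_map_right hA hB, dist_comm, and_comm]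

end BoxProd

/-- if `A` and `B` are Gt-EDB and Gt-DB with consistent
orientations, then `A □ B` is Gt-EDB. -/
theorem stmt9 {V W : Type*} [Fintype V] [Fintype W]
    (A : SimpleGraph V) (B : SimpleGraph W) (t : ℕ)
    (hA : A.Connected) (hB : B.Connected)
    (hGtA : ∀ a₁ a₂ : V, A.Adj a₁ a₂ →
      (mCount A a₁ a₂ = t * mCount A a₂ a₁ ∧ nCount A a₁ a₂ = t * nCount A a₂ a₁) ∨
      (mCount A a₂ a₁ = t * mCount A a₁ a₂ ∧ nCount A a₂ a₁ = t * nCount A a₁ a₂))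
    (hGtB : ∀ b₁ b₂ : W, B.Adj b₁ b₂ →
      (mCount B b₁ b₂ = t * mCount B b₂ b₁ ∧ nCount B b₁ b₂ = t * nCount B b₂ b₁) ∨
      (mCount B b₂ b₁ = t * mCount B b₁ b₂ ∧ nCount B b₂ b₁ = t * nCount B b₁ b₂)) :
    GtEDB (A.boxProd B) t := by
  have combine {m₁ m₂ n₁ n₂ : ℕ} (X Y : ℕ)
      (h : (m₁ = t * m₂ ∧ n₁ = t * n₂) ∨ (m₂ = t * m₁ ∧ n₂ = t * n₁)) :
      m₁ * X + n₁ * Y = t * (m₂ * X + n₂ * Y) ∨ m₂ * X + n₂ * Y = t * (m₁ * X + n₁ * Y) := by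
    rcases h with ⟨rfl, rfl⟩ | ⟨rfl, rfl⟩ <;> [left; right] <;> ring
  rintro ⟨a₁, b₁⟩ ⟨a₂, b₂⟩ (⟨hadj, rfl : b₁ = b₂⟩ | ⟨hadj, rfl : a₁ = a₂⟩)
  · rw [mCount_boxProd_left hA hB, mCount_boxProd_left hA hB]
    exact combine _ _ (hGtA a₁ a₂ hadj)
  · rw [mCount_boxProd_right hA hB, mCount_boxProd_right hA hB]
    exact combine _ _ (hGtB b₁ b₂ hadj)
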